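/- Suppose ζₙ → ζ ≠ 0 in Wasserstein₁ on finite nonnegative measures on [0,∞) with finite first moment, and xₙ → x in [0,∞) with x < ⟨χ,ζ⟩. Then F⁻¹_{ζₙ}(xₙ) → F⁻¹_ζ(x). -/

import Mathlib

open MeasureTheory Filter

/-- `F_ζ(x) = ∫ min(y,x) dζ(y)`. -/
noncomputable def Fz (ζ : Measure ℝ) (x : ℝ) : ℝ := ∫ y, min y x ∂ζ

/-- The supremum `x*` of the support of `ζ`. -/
noncomputable def xstar (ζ : Measure ℝ) : ℝ := sInf {x : ℝ | ζ (Set.Ioi x) = 0}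

/-- The generalized inverse `F⁻¹_ζ`. -/
noncomputable def Finv (ζ : Measure ℝ) (t : ℝ) : ℝ :=
  if t < ∫ y, y ∂ζ then sInf {x : ℝ | 0 ≤ x ∧ t ≤ Fz ζ x} else xstar ζ

/-!
On `[0, ∞)` the integrand `y ↦ min y a` of `F_ζ(a)` is bounded and continuous, so weak
convergence alone gives `F_{ζₙ} → F_ζ` pointwise. Since `x < ⟨χ, ζ⟩`, the point
`q = F⁻¹_ζ(x)` is a strict crossing of level `x`: `F_ζ < x` on `[0, q)` by minimality, and
`F_ζ > x` on `(q, ∞)` because `F_ζ` is continuous and strictly increasing until it reaches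
`⟨χ, ζ⟩`. For monotone `F_{ζₙ}` and levels `xₙ → x`, the infimum of `{F_{ζₙ} ≥ xₙ}` is then
squeezed to `q`; convergence of first moments puts `xₙ` eventually below `⟨χ, ζₙ⟩`, where
`F⁻¹_{ζₙ}(xₙ)` is that infimum.
-/

open Set Topology

theorem tendsto_csInf_superlevel {ι : Type*} {l : Filter ι} {F : ι → ℝ → ℝ} {G : ℝ → ℝ}
    {t : ι → ℝ} {s q : ℝ} (hF : ∀ i, Monotone (F i))
    (hFG : ∀ a, Tendsto (fun i => F i a) l (𝓝 (G a))) (ht : Tendsto t l (𝓝 s)) (hq : 0 ≤ q)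
    (hbelow : ∀ c, 0 ≤ c → c < q → G c < s) (habove : ∀ d, q < d → s < G d) :
    Tendsto (fun i => sInf {z | 0 ≤ z ∧ t i ≤ F i z}) l (𝓝 q) := by
  have hmem : ∀ d, q < d → ∀ᶠ i in l, d ∈ {z | 0 ≤ z ∧ t i ≤ F i z} := fun d hd =>
    (ht.eventually_lt (hFG d) (habove d hd)).mono fun i hi => ⟨hq.trans hd.le, hi.le⟩
  have hle : ∀ d, q < d → ∀ᶠ i in l, sInf {z | 0 ≤ z ∧ t i ≤ F i z} ≤ d := fun d hd =>
    (hmem d hd).mono fun i hi => csInf_le ⟨0, fun _ hz => hz.1⟩ hi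
  have hge : ∀ c, c < q → ∀ᶠ i in l, c ≤ sInf {z | 0 ≤ z ∧ t i ≤ F i z} := by
    intro c hc
    rcases lt_or_ge c 0 with hc0 | hc0
    · filter_upwards [hmem (q + 1) (by linarith)] with i hne
      exact hc0.le.trans (le_csInf ⟨_, hne⟩ fun _ hz => hz.1)
    · filter_upwards [hmem (q + 1) (by linarith), (hFG c).eventually_lt ht (hbelow c hc0 hc)]
        with i hne hlt
      exact le_csInf ⟨_, hne⟩ fun z hz =>
        le_of_not_gt fun hzc => (hlt.trans_le hz.2).not_ge (hF i hzc.le)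
  refine tendsto_order.2 ⟨fun c hc => ?_, fun d hd => ?_⟩
  · obtain ⟨c', hcc', hc'q⟩ := exists_between hc
    exact (hge c' hc'q).mono fun i hi => hcc'.trans_le hi
  · obtain ⟨d', hqd', hd'd⟩ := exists_between hd
    exact (hle d' hqd').mono fun i hi => hi.trans_lt hd'd

section Fz

variable {μ : Measure ℝ}

lemma integrable_min_const [IsFiniteMeasure μ] (hint : Integrable id μ) (a : ℝ) :
    Integrable (fun y => min y a) μ :=
  hint.inf (integrable_const a)

lemma Fz_monotone [IsFiniteMeasure μ] (hint : Integrable id μ) : Monotone (Fz μ) :=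
  fun _ _ hab => integral_mono (integrable_min_const hint _) (integrable_min_const hint _)
    fun _ => min_le_min le_rfl hab

lemma lipschitzWith_Fz [IsFiniteMeasure μ] (hint : Integrable id μ) :
    LipschitzWith (μ univ).toNNReal (Fz μ) := by
  refine LipschitzWith.of_dist_le_mul fun a b => ?_
  rw [Real.dist_eq, Real.dist_eq, Fz, Fz,
    ← integral_sub (integrable_min_const hint a) (integrable_min_const hint b)]
  calc |∫ y, (min y a - min y b) ∂μ| ≤ ∫ y, |min y a - min y b| ∂μ :=
        abs_integral_le_integral_abs
    _ ≤ ∫ _, |a - b| ∂μ := by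
        refine integral_mono ((integrable_min_const hint a).sub
          (integrable_min_const hint b)).abs (integrable_const _) fun y => ?_
        simpa using abs_min_sub_min_le_max y a y b
    _ = (μ univ).toNNReal * |a - b| := by
        rw [integral_const, smul_eq_mul, Measure.real]
        rfl

lemma tendsto_Fz_atTop (hint : Integrable id μ) :
    Tendsto (Fz μ) atTop (𝓝 (∫ y, y ∂μ)) := by
  refine tendsto_integral_filter_of_dominated_convergence (fun y => |y|)
    (.of_forall fun _ => (continuous_id.min continuous_const).aestronglyMeasurable) ?_
    hint.abs (.of_forall fun y => tendsto_const_nhds.congr' ?_)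
  · filter_upwards [eventually_ge_atTop 0] with z hz
    refine .of_forall fun y => ?_
    rcases le_total y z with h | h
    · rw [min_eq_left h, Real.norm_eq_abs]
    · rw [min_eq_right h, Real.norm_of_nonneg hz]
      exact h.trans (le_abs_self y)
  · filter_upwards [eventually_ge_atTop y] with z hz
    exact (min_eq_left hz).symm

lemma exists_le_Fz (hint : Integrable id μ) {t : ℝ} (ht : t < ∫ y, y ∂μ) :
    ∃ z, 0 ≤ z ∧ t ≤ Fz μ z :=
  ((eventually_ge_atTop 0).and
    ((tendsto_Fz_atTop hint).eventually (eventually_ge_nhds ht))).exists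

lemma Fz_lt_Fz_of_lt_integral [IsFiniteMeasure μ] (hint : Integrable id μ) {a b : ℝ}
    (hab : a < b) (hb : Fz μ b < ∫ y, y ∂μ) : Fz μ a < Fz μ b := by
  by_cases hIoi : μ (Ioi a) = 0
  · have hle : ∀ᵐ y ∂μ, y ≤ a :=
      (measure_eq_zero_iff_ae_notMem.1 hIoi).mono fun _ hy => not_lt.1 hy
    refine absurd (integral_congr_ae ?_) hb.ne
    filter_upwards [hle] with y hy
    exact min_eq_left (hy.trans hab.le)
  · have hpos : 0 < ∫ y, (min y b - min y a) ∂μ := by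
      rw [integral_pos_iff_support_of_nonneg_ae
        (.of_forall fun y => sub_nonneg.2 (min_le_min le_rfl hab.le))
        ((integrable_min_const hint b).sub (integrable_min_const hint a))]
      refine (pos_iff_ne_zero.2 hIoi).trans_le (measure_mono fun y (hy : a < y) => ?_)
      rw [Function.mem_support, min_eq_right hy.le, sub_ne_zero]
      exact (lt_min hy hab).ne'
    rw [integral_sub (integrable_min_const hint b) (integrable_min_const hint a)] at hpos
    exact sub_pos.1 hpos

end Fz

lemma ae_nonneg_of_measure_Iio_eq_zero {μ : Measure ℝ} (h : μ (Iio 0) = 0) :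
    ∀ᵐ y ∂μ, 0 ≤ y :=
  (measure_eq_zero_iff_ae_notMem.1 h).mono fun _ hy => not_lt.1 hy

lemma tendsto_Fz_of_tendsto_integral_bcf {ι : Type*} {l : Filter ι} {μs : ι → Measure ℝ}
    {μ : Measure ℝ} (hμs : ∀ i, ∀ᵐ y ∂μs i, 0 ≤ y) (hμ : ∀ᵐ y ∂μ, 0 ≤ y)
    (hweak : ∀ f : BoundedContinuousFunction ℝ ℝ,
      Tendsto (fun i => ∫ y, f y ∂μs i) l (𝓝 (∫ y, f y ∂μ))) (a : ℝ) :
    Tendsto (fun i => Fz (μs i) a) l (𝓝 (Fz μ a)) := by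
  -- on `[0, ∞)`, `y ↦ min y a` agrees with the bounded continuous `y ↦ min (max y 0) a`
  let g : BoundedContinuousFunction ℝ ℝ :=
    .ofNormedAddCommGroup (fun y => min (max y 0) a)
      ((continuous_id.max continuous_const).min continuous_const) |a| fun y => by
        rcases le_total (max y 0) a with h | h
        · rw [min_eq_left h, Real.norm_of_nonneg (le_max_right y 0)]
          exact h.trans (le_abs_self a)
        · rw [min_eq_right h, Real.norm_eq_abs]
  have hg : ∀ ν : Measure ℝ, (∀ᵐ y ∂ν, 0 ≤ y) → ∫ y, g y ∂ν = Fz ν a := fun ν hν =>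
    integral_congr_ae (hν.mono fun y hy => by simp [g, max_eq_left hy])
  simpa only [hg _ (hμs _), hg μ hμ] using hweak g

section Finv

variable {μ : Measure ℝ} {t : ℝ}

lemma Finv_of_lt_integral (ht : t < ∫ y, y ∂μ) :
    Finv μ t = sInf {z | 0 ≤ z ∧ t ≤ Fz μ z} :=
  if_pos ht

lemma Finv_nonneg (hint : Integrable id μ) (ht : t < ∫ y, y ∂μ) : 0 ≤ Finv μ t := by
  rw [Finv_of_lt_integral ht]
  exact le_csInf (exists_le_Fz hint ht) fun _ hz => hz.1

lemma Fz_lt_of_lt_Finv (ht : t < ∫ y, y ∂μ) {c : ℝ} (hc : 0 ≤ c) (hcq : c < Finv μ t) :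
    Fz μ c < t := by
  rw [Finv_of_lt_integral ht] at hcq
  exact lt_of_not_ge fun h => hcq.not_ge (csInf_le ⟨0, fun _ hz => hz.1⟩ ⟨hc, h⟩)

lemma le_Fz_Finv [IsFiniteMeasure μ] (hint : Integrable id μ) (ht : t < ∫ y, y ∂μ) :
    t ≤ Fz μ (Finv μ t) := by
  rw [Finv_of_lt_integral ht]
  have hclosed : IsClosed {z | 0 ≤ z ∧ t ≤ Fz μ z} :=
    (isClosed_le continuous_const continuous_id).inter
      (isClosed_le continuous_const (lipschitzWith_Fz hint).continuous)
  exact (hclosed.csInf_mem (exists_le_Fz hint ht) ⟨0, fun _ hz => hz.1⟩).2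

lemma lt_Fz_of_Finv_lt [IsFiniteMeasure μ] (hint : Integrable id μ) (ht : t < ∫ y, y ∂μ)
    {d : ℝ} (hd : Finv μ t < d) : t < Fz μ d := by
  by_contra! hdt
  exact (le_Fz_Finv hint ht).not_gt
    (Fz_lt_Fz_of_lt_integral hint hd (hdt.trans_lt ht) |>.trans_le hdt)

end Finv

theorem stmt4_general (ζn : ℕ → Measure ℝ) (ζ : Measure ℝ)
    (hfin : ∀ n, IsFiniteMeasure (ζn n)) [IsFiniteMeasure ζ]
    (hsuppn : ∀ n, ζn n (Set.Iio 0) = 0) (hsupp : ζ (Set.Iio 0) = 0)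
    (hintn : ∀ n, Integrable id (ζn n)) (hint : Integrable id ζ)
    (hweak : ∀ f : BoundedContinuousFunction ℝ ℝ,
      Tendsto (fun n => ∫ y, f y ∂(ζn n)) atTop (nhds (∫ y, f y ∂ζ)))
    (hmom : Tendsto (fun n => ∫ y, y ∂(ζn n)) atTop (nhds (∫ y, y ∂ζ)))
    (xn : ℕ → ℝ) (x : ℝ)
    (hxconv : Tendsto xn atTop (nhds x)) (hxlt : x < ∫ y, y ∂ζ) :
    Tendsto (fun n => Finv (ζn n) (xn n)) atTop (nhds (Finv ζ x)) := by
  have hFz := tendsto_Fz_of_tendsto_integral_bcf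
    (fun n => ae_nonneg_of_measure_Iio_eq_zero (hsuppn n))
    (ae_nonneg_of_measure_Iio_eq_zero hsupp) hweak
  have hmono : ∀ n, Monotone (Fz (ζn n)) := fun n =>
    have := hfin n
    Fz_monotone (hintn n)
  refine (tendsto_csInf_superlevel hmono hFz hxconv (Finv_nonneg hint hxlt)
    (fun c => Fz_lt_of_lt_Finv hxlt) (fun d => lt_Fz_of_Finv_lt hint hxlt)).congr' ?_
  filter_upwards [hxconv.eventually_lt hmom hxlt] with n hn
  exact (Finv_of_lt_integral hn).symm

theorem stmt4 (ζn : ℕ → Measure ℝ) (ζ : Measure ℝ)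
    (hfin : ∀ n, IsFiniteMeasure (ζn n)) [IsFiniteMeasure ζ] (hne : ζ ≠ 0)
    (hsuppn : ∀ n, ζn n (Set.Iio 0) = 0) (hsupp : ζ (Set.Iio 0) = 0)
    (hintn : ∀ n, Integrable id (ζn n)) (hint : Integrable id ζ)
    (hweak : ∀ f : BoundedContinuousFunction ℝ ℝ,
      Tendsto (fun n => ∫ y, f y ∂(ζn n)) atTop (nhds (∫ y, f y ∂ζ)))
    (hmom : Tendsto (fun n => ∫ y, y ∂(ζn n)) atTop (nhds (∫ y, y ∂ζ)))
    (xn : ℕ → ℝ) (x : ℝ) (hxn : ∀ n, 0 ≤ xn n) (hx : 0 ≤ x)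
    (hxconv : Tendsto xn atTop (nhds x)) (hxlt : x < ∫ y, y ∂ζ) :
    Tendsto (fun n => Finv (ζn n) (xn n)) atTop (nhds (Finv ζ x)) :=
  stmt4_general ζn ζ hfin hsuppn hsupp hintn hint hweak hmom xn x hxconv hxlt
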